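/- (Memory perturbation bound, Proposition 3.) Let W_f, W_i, W_c be real m × p matrices, U_f, U_i, U_c real m × n matrices, b_f, b_i, b_c ∈ ℝᵐ, and let x, x̂ ∈ ℝᵖ, h, ĥ ∈ ℝⁿ, and s ∈ ℝᵐ with every component s_j ∈ [−1, 1]. Define f(x,h) = σ∘(W_f·x + U_f·h + b_f), i(x,h) = σ∘(W_i·x + U_i·h + b_i), ci(x,h) = tanh∘(W_c·x + U_c·h + b_c), and the updated cell state S(x,h) = s ⊙ f(x,h) + i(x,h) ⊙ ci(x,h). Then ‖S(x̂,ĥ) − S(x,h)‖ ≤ γ_x·‖x̂ − x‖ + γ_h·‖ĥ − h‖, where γ_x = (1/4)·‖W_f‖ + (17/16)·(‖W_i‖ + ‖W_c‖) and γ_h = (1/4)·‖U_f‖ + (17/16)·(‖U_i‖ + ‖U_c‖). -/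

import Mathlib

/-- The logistic sigmoid `σ(x) = 1 / (1 + e^{-x})`. -/
noncomputable def sigmoid (x : ℝ) : ℝ := 1 / (1 + Real.exp (-x))

/-- Componentwise application of `f : ℝ → ℝ` to a vector of `ℝⁿ`. -/
noncomputable def cwise {n : ℕ} (f : ℝ → ℝ) (v : EuclideanSpace ℝ (Fin n)) :
    EuclideanSpace ℝ (Fin n) := WithLp.toLp 2 (fun i => f (v i))

/-- Hadamard (componentwise) product of vectors of `ℝⁿ`. -/
def hadam {n : ℕ} (v w : EuclideanSpace ℝ (Fin n)) : EuclideanSpace ℝ (Fin n) :=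
  WithLp.toLp 2 (fun i => v i * w i)

/-- The operator norm of a real matrix with respect to Euclidean norms. -/
noncomputable def matOpNorm {m n : ℕ} (W : Matrix (Fin m) (Fin n) ℝ) : ℝ :=
  ‖LinearMap.toContinuousLinearMap (Matrix.toEuclideanLin W)‖

/-!
With `Δf = f(x̂,ĥ) − f(x,h)` and so on, `S(x̂,ĥ) − S(x,h) = s ⊙ Δf + i(x̂,ĥ) ⊙ Δci + ci(x,h) ⊙ Δi`.
The left factors have entries in `[−1, 1]`, so multiplying by them does not increase the norm.
Each gate is a `K`-Lipschitz scalar function (`K = 1/4` for `σ`, `K = 1` for `tanh`) applied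
componentwise to preactivations that differ by `W (x̂ − x) + U (ĥ − h)`.
-/

open NNReal

lemma sigmoid_eq_real_sigmoid : sigmoid = Real.sigmoid := funext fun _ => one_div _

lemma abs_sigmoid_le_one (x : ℝ) : |sigmoid x| ≤ 1 := by
  rw [sigmoid_eq_real_sigmoid, abs_of_pos (Real.sigmoid_pos x)]
  exact Real.sigmoid_le_one x

lemma lipschitzWith_sigmoid : LipschitzWith 4⁻¹ sigmoid := by
  rw [sigmoid_eq_real_sigmoid]
  refine lipschitzWith_of_nnnorm_deriv_le differentiable_sigmoid fun x => ?_
  have h₀ := Real.sigmoid_pos x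
  have h₁ := Real.sigmoid_lt_one x
  rw [Real.deriv_sigmoid, ← NNReal.coe_le_coe, coe_nnnorm, Real.norm_eq_abs,
    abs_of_pos (by nlinarith), NNReal.coe_inv, NNReal.coe_ofNat]
  -- σ (1 - σ) ≤ 1/4 is AM-GM
  nlinarith [sq_nonneg (Real.sigmoid x - 1 / 2)]

lemma Real.hasDerivAt_tanh (x : ℝ) : HasDerivAt Real.tanh (1 - Real.tanh x ^ 2) x := by
  have hcosh := (Real.cosh_pos x).ne'
  rw [show Real.tanh = Real.sinh / Real.cosh from funext Real.tanh_eq_sinh_div_cosh]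
  refine ((Real.hasDerivAt_sinh x).div (Real.hasDerivAt_cosh x) hcosh).congr_deriv ?_
  rw [Pi.div_apply]
  field_simp

lemma lipschitzWith_tanh : LipschitzWith 1 Real.tanh := by
  refine lipschitzWith_of_nnnorm_deriv_le
    (fun x => (Real.hasDerivAt_tanh x).differentiableAt) fun x => ?_
  rw [(Real.hasDerivAt_tanh x).deriv, ← NNReal.coe_le_coe, coe_nnnorm, Real.norm_eq_abs,
    NNReal.coe_one, abs_le]
  have := Real.tanh_sq_lt_one x
  constructor <;> nlinarith [sq_nonneg (Real.tanh x)]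

lemma EuclideanSpace.norm_le_norm_of_forall_abs_le {ι : Type*} [Fintype ι]
    {u w : EuclideanSpace ℝ ι} (h : ∀ i, |u i| ≤ |w i|) : ‖u‖ ≤ ‖w‖ := by
  rw [EuclideanSpace.norm_eq, EuclideanSpace.norm_eq]
  gcongr with i
  simpa only [Real.norm_eq_abs] using h i

section Componentwise

variable {m : ℕ}

@[simp] lemma cwise_apply (f : ℝ → ℝ) (v : EuclideanSpace ℝ (Fin m)) (i : Fin m) :
    cwise f v i = f (v i) := rfl

@[simp] lemma hadam_apply (v w : EuclideanSpace ℝ (Fin m)) (i : Fin m) :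
    hadam v w i = v i * w i := rfl

lemma norm_cwise_sub_le {f : ℝ → ℝ} {K : ℝ≥0} (hf : LipschitzWith K f)
    (v w : EuclideanSpace ℝ (Fin m)) : ‖cwise f v - cwise f w‖ ≤ K * ‖v - w‖ := by
  rw [← abs_of_nonneg K.coe_nonneg, ← Real.norm_eq_abs, ← norm_smul]
  refine EuclideanSpace.norm_le_norm_of_forall_abs_le fun i => ?_
  simpa [abs_mul, Real.dist_eq] using hf.dist_le_mul (v i) (w i)

lemma norm_hadam_le {v : EuclideanSpace ℝ (Fin m)} (hv : ∀ i, |v i| ≤ 1)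
    (w : EuclideanSpace ℝ (Fin m)) : ‖hadam v w‖ ≤ ‖w‖ :=
  EuclideanSpace.norm_le_norm_of_forall_abs_le fun i => by
    simpa [abs_mul] using mul_le_of_le_one_left (abs_nonneg (w i)) (hv i)

lemma hadam_sub_right (u v w : EuclideanSpace ℝ (Fin m)) :
    hadam u (v - w) = hadam u v - hadam u w := by
  ext i
  simp [mul_sub]

lemma hadam_sub_hadam (u v u' v' : EuclideanSpace ℝ (Fin m)) :
    hadam u v - hadam u' v' = hadam u (v - v') + hadam v' (u - u') := by
  ext i
  simp only [PiLp.add_apply, PiLp.sub_apply, hadam_apply]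
  ring

end Componentwise

lemma matOpNorm_nonneg {m n : ℕ} (W : Matrix (Fin m) (Fin n) ℝ) : 0 ≤ matOpNorm W :=
  norm_nonneg _

lemma norm_toEuclideanLin_le {m n : ℕ} (W : Matrix (Fin m) (Fin n) ℝ)
    (v : EuclideanSpace ℝ (Fin n)) : ‖Matrix.toEuclideanLin W v‖ ≤ matOpNorm W * ‖v‖ :=
  (LinearMap.toContinuousLinearMap (Matrix.toEuclideanLin W)).le_opNorm v

section Gate

variable {m n p : ℕ} (W : Matrix (Fin m) (Fin p) ℝ) (U : Matrix (Fin m) (Fin n) ℝ)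
  (b : EuclideanSpace ℝ (Fin m)) (x x' : EuclideanSpace ℝ (Fin p))
  (h h' : EuclideanSpace ℝ (Fin n))

lemma norm_affine_sub_le :
    ‖(Matrix.toEuclideanLin W x' + Matrix.toEuclideanLin U h' + b) -
        (Matrix.toEuclideanLin W x + Matrix.toEuclideanLin U h + b)‖ ≤
      matOpNorm W * ‖x' - x‖ + matOpNorm U * ‖h' - h‖ := by
  rw [add_sub_add_right_eq_sub, add_sub_add_comm, ← map_sub, ← map_sub]
  exact (norm_add_le _ _).trans
    (add_le_add (norm_toEuclideanLin_le W _) (norm_toEuclideanLin_le U _))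

lemma norm_gate_sub_le {g : ℝ → ℝ} {K : ℝ≥0} (hg : LipschitzWith K g) :
    ‖cwise g (Matrix.toEuclideanLin W x' + Matrix.toEuclideanLin U h' + b) -
        cwise g (Matrix.toEuclideanLin W x + Matrix.toEuclideanLin U h + b)‖ ≤
      K * (matOpNorm W * ‖x' - x‖ + matOpNorm U * ‖h' - h‖) :=
  (norm_cwise_sub_le hg _ _).trans
    (mul_le_mul_of_nonneg_left (norm_affine_sub_le W U b x x' h h') K.coe_nonneg)

end Gate

/-- Memory (cell-state) perturbation bound (Proposition 3): with
`f(x,h) = σ∘(W_f·x + U_f·h + b_f)`, `i(x,h) = σ∘(W_i·x + U_i·h + b_i)`,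
`ci(x,h) = tanh∘(W_c·x + U_c·h + b_c)`, `S(x,h) = s ⊙ f(x,h) + i(x,h) ⊙ ci(x,h)`,
and `s_j ∈ [−1,1]` for all `j`, one has
`‖S(x̂,ĥ) − S(x,h)‖ ≤ γ_x·‖x̂ − x‖ + γ_h·‖ĥ − h‖` where
`γ_x = (1/4)·‖W_f‖ + (17/16)·(‖W_i‖ + ‖W_c‖)` and
`γ_h = (1/4)·‖U_f‖ + (17/16)·(‖U_i‖ + ‖U_c‖)`. -/
theorem memory_perturbation_le
    (m n p : ℕ)
    (Wf Wi Wc : Matrix (Fin m) (Fin p) ℝ) (Uf Ui Uc : Matrix (Fin m) (Fin n) ℝ)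
    (bf bi bc : EuclideanSpace ℝ (Fin m))
    (x xhat : EuclideanSpace ℝ (Fin p)) (h hhat : EuclideanSpace ℝ (Fin n))
    (s : EuclideanSpace ℝ (Fin m)) (hs : ∀ j, s j ∈ Set.Icc (-1 : ℝ) 1)
    (fgate igate ci S :
      EuclideanSpace ℝ (Fin p) → EuclideanSpace ℝ (Fin n) → EuclideanSpace ℝ (Fin m))
    (hfgate : ∀ x' h', fgate x' h' =
      cwise sigmoid (Matrix.toEuclideanLin Wf x' + Matrix.toEuclideanLin Uf h' + bf))
    (higate : ∀ x' h', igate x' h' =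
      cwise sigmoid (Matrix.toEuclideanLin Wi x' + Matrix.toEuclideanLin Ui h' + bi))
    (hci : ∀ x' h', ci x' h' =
      cwise Real.tanh (Matrix.toEuclideanLin Wc x' + Matrix.toEuclideanLin Uc h' + bc))
    (hS : ∀ x' h', S x' h' = hadam s (fgate x' h') + hadam (igate x' h') (ci x' h')) :
    ‖S xhat hhat - S x h‖ ≤
      ((1 / 4) * matOpNorm Wf + (17 / 16) * (matOpNorm Wi + matOpNorm Wc)) * ‖xhat - x‖ +
      ((1 / 4) * matOpNorm Uf + (17 / 16) * (matOpNorm Ui + matOpNorm Uc)) * ‖hhat - h‖ := by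
  have hf := norm_gate_sub_le Wf Uf bf x xhat h hhat lipschitzWith_sigmoid
  have hi := norm_gate_sub_le Wi Ui bi x xhat h hhat lipschitzWith_sigmoid
  have hc := norm_gate_sub_le Wc Uc bc x xhat h hhat lipschitzWith_tanh
  rw [← hfgate, ← hfgate] at hf
  rw [← higate, ← higate] at hi
  rw [← hci, ← hci] at hc
  have hsplit : ‖S xhat hhat - S x h‖ ≤ ‖fgate xhat hhat - fgate x h‖ +
      ‖ci xhat hhat - ci x h‖ + ‖igate xhat hhat - igate x h‖ := by
    rw [hS, hS, add_sub_add_comm, ← hadam_sub_right, hadam_sub_hadam, ← add_assoc]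
    refine norm_add₃_le.trans (add_le_add_three (norm_hadam_le (fun j => ?_) _)
      (norm_hadam_le (fun j => ?_) _) (norm_hadam_le (fun j => ?_) _))
    · exact abs_le.mpr (hs j)
    · simpa only [higate, cwise_apply] using abs_sigmoid_le_one _
    · simpa only [hci, cwise_apply] using (Real.abs_tanh_lt_one _).le
  push_cast at hf hi hc
  -- the input gate and the candidate contribute with factors 1/4 and 1, both below 17/16
  linarith [mul_nonneg (matOpNorm_nonneg Wi) (norm_nonneg (xhat - x)),
    mul_nonneg (matOpNorm_nonneg Wc) (norm_nonneg (xhat - x)),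
    mul_nonneg (matOpNorm_nonneg Ui) (norm_nonneg (hhat - h)),
    mul_nonneg (matOpNorm_nonneg Uc) (norm_nonneg (hhat - h))]
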